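/- arXiv:1905.04011 — 3 statements merged into one kernel-verified Lean document; each statement's English description precedes it below -/
import Mathlib

section
/- Let a = (a1,a2) ∈ ℤ² and p ∈ ℝ², and assume that both k ↦ 1/(μ(k)·μ(k+p)) and k ↦ 1/(μ(k)·μ(k−p)) are Lebesgue integrable on [−π,π]². Define I_a(p) := (2π)^{−2} ∫_{[−π,π]²} exp(i(k1·a1 + k2·a2)) / (μ(k)·μ(k+p)) dk. Then conj(I_a(p)) = (−1)^{a1+a2} · I_a(−p). -/
open Complex Real MeasureTheory ComplexConjugate

/-- The characteristic polynomial of the non-interacting dimer model. -/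
noncomputable def mu (t1 t2 t3 : ℝ) (k : ℝ × ℝ) : ℂ :=
  (t1 : ℂ) + Complex.I * (t2 : ℂ) * Complex.exp (Complex.I * (k.1 : ℂ))
    - (t3 : ℂ) * Complex.exp (Complex.I * ((k.1 : ℂ) + (k.2 : ℂ)))
    - Complex.I * Complex.exp (Complex.I * (k.2 : ℂ))

/-- `I_a(p) = (2π)⁻² ∫_{[−π,π]²} e^{i k·a}/(μ(k) μ(k+p)) dk`. -/
noncomputable def Ia (t1 t2 t3 : ℝ) (a : ℤ × ℤ) (p : ℝ × ℝ) : ℂ :=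
  (((2 * π) ^ 2 : ℝ) : ℂ)⁻¹ *
    ∫ k in Set.Icc (-π) π ×ˢ Set.Icc (-π) π,
      Complex.exp (Complex.I * ((k.1 : ℂ) * (a.1 : ℂ) + (k.2 : ℂ) * (a.2 : ℂ)))
        / (mu t1 t2 t3 k * mu t1 t2 t3 (k + p))

/-!
Conjugation acts on `μ` as the reflection `k ↦ (π, π) - k`, and on the phase `e^{i k·a}` as the
same reflection up to the sign `(-1)^(a₁ + a₂)`. Conjugating the integrand of `I_a(p)` therefore
gives `(-1)^(a₁ + a₂)` times the reflected integrand of `I_a(-p)`. The reflection maps the square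
`[-π, π]²` onto `[0, 2π]²`, and since the integrand is `2π`-periodic in each variable, Fubini and
the one-dimensional translation invariance of integrals over a period show that the integral is
unchanged.
-/

open Set Function

theorem exp_I_mul_add_two_pi (z : ℂ) : exp (I * (z + 2 * π)) = exp (I * z) := by
  rw [mul_add, Complex.exp_add, show I * (2 * π) = 2 * π * I by ring, exp_two_pi_mul_I, mul_one]

theorem mu_add_two_pi_fst (t1 t2 t3 : ℝ) (k : ℝ × ℝ) :
    mu t1 t2 t3 (k + (2 * π, 0)) = mu t1 t2 t3 k := by
  obtain ⟨x, y⟩ := k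
  simp only [mu, Prod.mk_add_mk, add_zero]
  push_cast
  rw [add_right_comm (x : ℂ), exp_I_mul_add_two_pi, exp_I_mul_add_two_pi]

theorem mu_add_two_pi_snd (t1 t2 t3 : ℝ) (k : ℝ × ℝ) :
    mu t1 t2 t3 (k + (0, 2 * π)) = mu t1 t2 t3 k := by
  obtain ⟨x, y⟩ := k
  simp only [mu, Prod.mk_add_mk, add_zero]
  push_cast
  rw [← add_assoc, exp_I_mul_add_two_pi, exp_I_mul_add_two_pi]

theorem mu_pi_sub (t1 t2 t3 : ℝ) (k : ℝ × ℝ) :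
    mu t1 t2 t3 ((π, π) - k) = conj (mu t1 t2 t3 k) := by
  have h₁ (x : ℝ) : exp (I * ↑(π - x)) = -conj (exp (I * x)) := by
    rw [← exp_conj, ← exp_add_pi_mul_I]; congr 1; simp; ring
  have h₂ : exp (I * (↑(π - k.1) + ↑(π - k.2))) = conj (exp (I * (k.1 + k.2))) := by
    have : I * (↑(π - k.1) + ↑(π - k.2)) = conj (I * (k.1 + k.2)) + 2 * π * I := by simp; ring
    rw [this, exp_periodic, exp_conj]
  simp only [mu, Prod.fst_sub, Prod.snd_sub, h₁, h₂, map_add, map_sub, map_mul, conj_ofReal, conj_I]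
  ring

theorem setIntegral_Icc_comp_sub_left_of_periodic {E : Type*} [NormedAddCommGroup E]
    [NormedSpace ℝ E] {f : ℝ → E} {a b : ℝ} (hf : Periodic f (b - a)) (c : ℝ) :
    ∫ x in Icc a b, f (c - x) = ∫ x in Icc a b, f x := by
  rcases le_or_gt a b with hab | hba
  · rw [integral_Icc_eq_integral_Ioc, integral_Icc_eq_integral_Ioc,
      ← intervalIntegral.integral_of_le hab, ← intervalIntegral.integral_of_le hab,
      intervalIntegral.integral_comp_sub_left]
    simpa using hf.intervalIntegral_add_eq (c - b) a
  · simp [Icc_eq_empty_of_lt hba]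

theorem setIntegral_Icc_prod_Icc_comp_sub_left_of_periodic {E : Type*} [NormedAddCommGroup E]
    [NormedSpace ℝ E] {F : ℝ × ℝ → E} {a b c d : ℝ}
    (hF₁ : ∀ k, F (k + (b - a, 0)) = F k) (hF₂ : ∀ k, F (k + (0, d - c)) = F k)
    (v : ℝ × ℝ) (hF : IntegrableOn F (Icc a b ×ˢ Icc c d))
    (hFv : IntegrableOn (fun k ↦ F (v - k)) (Icc a b ×ˢ Icc c d)) :
    ∫ k in Icc a b ×ˢ Icc c d, F (v - k) = ∫ k in Icc a b ×ˢ Icc c d, F k := by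
  rw [Measure.volume_eq_prod] at hF hFv ⊢
  rw [setIntegral_prod _ hFv, setIntegral_prod _ hF]
  have hinner (x : ℝ) : ∫ y in Icc c d, F (v - (x, y)) = ∫ y in Icc c d, F (v.1 - x, y) :=
    setIntegral_Icc_comp_sub_left_of_periodic (f := fun y ↦ F (v.1 - x, y))
      (fun y ↦ by simpa using hF₂ (v.1 - x, y)) v.2
  simp_rw [hinner]
  exact setIntegral_Icc_comp_sub_left_of_periodic
    (f := fun x ↦ ∫ y in Icc c d, F (x, y))
    (fun x ↦ by simp_rw [← hF₁ (x, _), Prod.mk_add_mk, add_zero]) v.1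

noncomputable def IaIntegrand (t1 t2 t3 : ℝ) (a : ℤ × ℤ) (p k : ℝ × ℝ) : ℂ :=
  exp (I * (k.1 * a.1 + k.2 * a.2)) / (mu t1 t2 t3 k * mu t1 t2 t3 (k + p))

section IaIntegrand

variable (t1 t2 t3 : ℝ) (a : ℤ × ℤ) (p : ℝ × ℝ)

theorem IaIntegrand_add_two_pi_fst (k : ℝ × ℝ) :
    IaIntegrand t1 t2 t3 a p (k + (2 * π, 0)) = IaIntegrand t1 t2 t3 a p k := by
  have hphase : exp (I * (↑(k.1 + 2 * π) * a.1 + ↑(k.2 + 0) * a.2))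
      = exp (I * (k.1 * a.1 + k.2 * a.2)) := by
    rw [show I * (↑(k.1 + 2 * π) * a.1 + ↑(k.2 + 0) * a.2)
        = I * (k.1 * a.1 + k.2 * a.2) + a.1 * (2 * π * I) by push_cast; ring,
      Complex.exp_add, exp_int_mul_two_pi_mul_I, mul_one]
  rw [IaIntegrand, IaIntegrand, Prod.fst_add, Prod.snd_add, hphase, add_right_comm k,
    mu_add_two_pi_fst, mu_add_two_pi_fst]

theorem IaIntegrand_add_two_pi_snd (k : ℝ × ℝ) :
    IaIntegrand t1 t2 t3 a p (k + (0, 2 * π)) = IaIntegrand t1 t2 t3 a p k := by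
  have hphase : exp (I * (↑(k.1 + 0) * a.1 + ↑(k.2 + 2 * π) * a.2))
      = exp (I * (k.1 * a.1 + k.2 * a.2)) := by
    rw [show I * (↑(k.1 + 0) * a.1 + ↑(k.2 + 2 * π) * a.2)
        = I * (k.1 * a.1 + k.2 * a.2) + a.2 * (2 * π * I) by push_cast; ring,
      Complex.exp_add, exp_int_mul_two_pi_mul_I, mul_one]
  rw [IaIntegrand, IaIntegrand, Prod.fst_add, Prod.snd_add, hphase, add_right_comm k,
    mu_add_two_pi_snd, mu_add_two_pi_snd]

theorem IaIntegrand_neg_pi_sub (k : ℝ × ℝ) :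
    IaIntegrand t1 t2 t3 a (-p) ((π, π) - k) =
      (-1) ^ (a.1 + a.2) * conj (IaIntegrand t1 t2 t3 a p k) := by
  have hphase : exp (I * (↑(π - k.1) * a.1 + ↑(π - k.2) * a.2))
      = (-1) ^ (a.1 + a.2) * conj (exp (I * (k.1 * a.1 + k.2 * a.2))) := by
    rw [show I * (↑(π - k.1) * a.1 + ↑(π - k.2) * a.2)
        = ↑(a.1 + a.2) * (π * I) + conj (I * (k.1 * a.1 + k.2 * a.2)) by simp; ring,
      Complex.exp_add, exp_int_mul, exp_pi_mul_I, exp_conj]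
  rw [IaIntegrand, IaIntegrand, show (π, π) - k + -p = (π, π) - (k + p) by abel, mu_pi_sub,
    mu_pi_sub, Prod.fst_sub, Prod.snd_sub, hphase, map_div₀, map_mul, mul_div_assoc]

theorem integrableOn_IaIntegrand {s : Set (ℝ × ℝ)}
    (h : IntegrableOn (fun k ↦ (mu t1 t2 t3 k * mu t1 t2 t3 (k + p))⁻¹) s) :
    IntegrableOn (IaIntegrand t1 t2 t3 a p) s := by
  refine h.bdd_mul (c := 1) (by fun_prop) (.of_forall fun k ↦ ?_)
  rw [norm_exp]
  simp [mul_re]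

theorem conj_IaIntegrand (k : ℝ × ℝ) :
    conj (IaIntegrand t1 t2 t3 a p k) =
      (-1) ^ (a.1 + a.2) * IaIntegrand t1 t2 t3 a (-p) ((π, π) - k) := by
  rw [IaIntegrand_neg_pi_sub, ← mul_assoc, ← mul_zpow]
  simp

end IaIntegrand

theorem Ia_conj_symmetry_general (t1 t2 t3 : ℝ)
    (a : ℤ × ℤ) (p : ℝ × ℝ)
    (hint : IntegrableOn (fun k : ℝ × ℝ => (mu t1 t2 t3 k * mu t1 t2 t3 (k + p))⁻¹)
      (Set.Icc (-π) π ×ˢ Set.Icc (-π) π))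
    (hint' : IntegrableOn (fun k : ℝ × ℝ => (mu t1 t2 t3 k * mu t1 t2 t3 (k - p))⁻¹)
      (Set.Icc (-π) π ×ˢ Set.Icc (-π) π)) :
    conj (Ia t1 t2 t3 a p) = (-1 : ℂ) ^ (a.1 + a.2) * Ia t1 t2 t3 a (-p) := by
  have hp := integrableOn_IaIntegrand t1 t2 t3 a p hint
  have hmp := integrableOn_IaIntegrand t1 t2 t3 a (-p) (by simpa only [sub_eq_add_neg] using hint')
  have hrefl : IntegrableOn (fun k ↦ IaIntegrand t1 t2 t3 a (-p) ((π, π) - k))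
      (Icc (-π) π ×ˢ Icc (-π) π) := by
    simp_rw [IaIntegrand_neg_pi_sub]
    exact (conjCLE.toContinuousLinearMap.integrable_comp hp).const_mul _
  have hperiod : π - -π = 2 * π := by ring
  have hreflect := setIntegral_Icc_prod_Icc_comp_sub_left_of_periodic
    (hperiod ▸ IaIntegrand_add_two_pi_fst t1 t2 t3 a (-p))
    (hperiod ▸ IaIntegrand_add_two_pi_snd t1 t2 t3 a (-p)) (π, π) hmp hrefl
  calc conj (Ia t1 t2 t3 a p)
      = (((2 * π) ^ 2 : ℝ) : ℂ)⁻¹ *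
          ∫ k in Icc (-π) π ×ˢ Icc (-π) π, conj (IaIntegrand t1 t2 t3 a p k) := by
        simp only [Ia, map_mul, map_inv₀, conj_ofReal, integral_conj, IaIntegrand]
    _ = (-1 : ℂ) ^ (a.1 + a.2) * ((((2 * π) ^ 2 : ℝ) : ℂ)⁻¹ *
          ∫ k in Icc (-π) π ×ˢ Icc (-π) π, IaIntegrand t1 t2 t3 a (-p) ((π, π) - k)) := by
        simp_rw [conj_IaIntegrand, integral_const_mul]
        ring
    _ = (-1 : ℂ) ^ (a.1 + a.2) * Ia t1 t2 t3 a (-p) := by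
        rw [hreflect]
        rfl

/-- Conjugation symmetry `conj (I_a(p)) = (−1)^{a₁+a₂} I_a(−p)`. -/
theorem Ia_conj_symmetry (t1 t2 t3 : ℝ) (ht1 : 0 < t1) (ht2 : 0 < t2) (ht3 : 0 < t3)
    (a : ℤ × ℤ) (p : ℝ × ℝ)
    (hint : IntegrableOn (fun k : ℝ × ℝ => (mu t1 t2 t3 k * mu t1 t2 t3 (k + p))⁻¹)
      (Set.Icc (-π) π ×ˢ Set.Icc (-π) π))
    (hint' : IntegrableOn (fun k : ℝ × ℝ => (mu t1 t2 t3 k * mu t1 t2 t3 (k - p))⁻¹)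
      (Set.Icc (-π) π ×ˢ Set.Icc (-π) π)) :
    conj (Ia t1 t2 t3 a p) = (-1 : ℂ) ^ (a.1 + a.2) * Ia t1 t2 t3 a (-p) :=
  Ia_conj_symmetry_general t1 t2 t3 a p hint hint'
end

section
/- Assume t3 ≠ 1 and that k ↦ 1/μ(k) is Lebesgue integrable on [−π,π]². Then the following two residue-theorem identities hold: (2π)^{−2} ∫_{[−π,π]²} exp(i k2)/μ(k) dk = −(2π)^{−1} ∫_{−π}^{π} 1{|A(θ)| < |B(θ)|} / B(θ) dθ, and (2π)^{−2} ∫_{[−π,π]²} exp(i(k1+k2))/μ(k) dk = −(2π)^{−1} ∫_{−π}^{π} exp(iθ) · 1{|A(θ)| < |B(θ)|} / B(θ) dθ, where 1{·} denotes the indicator function. (Note that |B(θ)|² = 1 + t3² + 2 t3 sin θ ≥ (1−t3)² > 0, so the right-hand integrands are bounded.) -/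
open Complex Real MeasureTheory

/-- `A(θ) = t₁ + i t₂ e^{iθ}`. -/
noncomputable def Afun (t1 t2 : ℝ) (θ : ℝ) : ℂ :=
  (t1 : ℂ) + Complex.I * (t2 : ℂ) * Complex.exp (Complex.I * (θ : ℂ))

/-- `B(θ) = i + t₃ e^{iθ}`. -/
noncomputable def Bfun (t3 : ℝ) (θ : ℝ) : ℂ :=
  Complex.I + (t3 : ℂ) * Complex.exp (Complex.I * (θ : ℂ))

/-!
Write `μ(θ, y) = A(θ) - B(θ) e^{iy}`. By Fubini the double integrals reduce to the inner
integrals `∫ e^{iy} / (A - B e^{iy}) dy = -B⁻¹ ∫ e^{iy} / (e^{iy} - A/B) dy`, and the last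
integral is `-i` times the contour integral of `(z - A/B)⁻¹` over the unit circle: `2π` when
`|A| < |B|` and `0` when `|A| > |B|` (Cauchy). Since
`|A|² - |B|² = t₁² + t₂² - 1 - t₃² - 2 (t₁t₂ + t₃) sin θ` with `t₁t₂ + t₃ ≠ 0`, the case
`|A| = |B|` occurs only where `sin θ` takes one fixed value, a null set of `θ`.
-/

theorem setIntegral_Icc_eq_intervalIntegral {E : Type*} [NormedAddCommGroup E]
    [NormedSpace ℝ E] {a b : ℝ} (hab : a ≤ b) (f : ℝ → E) :
    ∫ x in Set.Icc a b, f x = ∫ x in a..b, f x := by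
  rw [intervalIntegral.integral_of_le hab, integral_Icc_eq_integral_Ioc]

theorem circleIntegral_sub_inv_eq_intervalIntegral (w : ℂ) :
    (∮ z in C(0, 1), (z - w)⁻¹)
      = I * ∫ θ in (-π)..π, exp (I * θ) / (exp (I * θ) - w) := by
  have hper : Function.Periodic (fun θ : ℝ => exp (I * θ) / (exp (I * θ) - w)) (2 * π) := by
    intro θ
    simp only [ofReal_add, ofReal_mul, ofReal_ofNat, mul_add, Complex.exp_add]
    rw [show I * (2 * π) = 2 * π * I by ring, exp_two_pi_mul_I, mul_one]
  have hshift := hper.intervalIntegral_add_eq (-π) 0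
  rw [show -π + 2 * π = π by ring, zero_add] at hshift
  rw [hshift, ← intervalIntegral.integral_const_mul, circleIntegral]
  refine intervalIntegral.integral_congr fun θ _ => ?_
  simp only [deriv_circleMap, circleMap_zero, ofReal_one, one_mul, smul_eq_mul]
  rw [mul_comm (θ : ℂ) I]
  ring

theorem intervalIntegral_exp_div_exp_sub {w : ℂ} (hw : ‖w‖ ≠ 1) :
    ∫ θ in (-π)..π, exp (I * θ) / (exp (I * θ) - w) = if ‖w‖ < 1 then 2 * π else 0 := by
  refine mul_left_cancel₀ I_ne_zero ?_
  rw [← circleIntegral_sub_inv_eq_intervalIntegral]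
  split_ifs with hlt
  · rw [circleIntegral.integral_sub_inv_of_mem_ball (mem_ball_zero_iff.mpr hlt)]
    push_cast
    ring
  · have hgt : 1 < ‖w‖ := lt_of_le_of_ne (not_lt.mp hlt) hw.symm
    rw [ofReal_zero, mul_zero]
    refine DiffContOnCl.circleIntegral_eq_zero zero_le_one (DifferentiableOn.diffContOnCl ?_)
    rw [closure_ball _ one_ne_zero]
    refine (differentiableOn_id.sub_const w).inv fun z hz => sub_ne_zero.mpr ?_
    rintro rfl
    exact (mem_closedBall_zero_iff.mp hz).not_gt hgt

theorem intervalIntegral_exp_div_sub_mul_exp {a b : ℂ} (hb : b ≠ 0) (hab : ‖a‖ ≠ ‖b‖) :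
    ∫ θ in (-π)..π, exp (I * θ) / (a - b * exp (I * θ))
      = -(2 * π) * if ‖a‖ < ‖b‖ then b⁻¹ else 0 := by
  have hrw : ∀ θ : ℝ, exp (I * θ) / (a - b * exp (I * θ))
      = -b⁻¹ * (exp (I * θ) / (exp (I * θ) - a / b)) := by
    intro θ
    rw [show a - b * exp (I * θ) = -b * (exp (I * θ) - a / b) by field_simp; ring,
      div_eq_mul_inv, mul_inv, div_eq_mul_inv, inv_neg]
    ring
  have hnorm : ‖a / b‖ < 1 ↔ ‖a‖ < ‖b‖ := by
    rw [norm_div, div_lt_one (norm_pos_iff.mpr hb)]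
  have hne : ‖a / b‖ ≠ 1 := by
    rwa [norm_div, Ne, div_eq_one_iff_eq (norm_ne_zero_iff.mpr hb)]
  simp only [hrw, intervalIntegral.integral_const_mul, intervalIntegral_exp_div_exp_sub hne,
    hnorm]
  split_ifs <;> push_cast <;> ring

theorem ae_sin_ne (s : ℝ) : ∀ᵐ θ : ℝ, Real.sin θ ≠ s := by
  refine ae_iff.mpr ?_
  simp only [not_not]
  rcases em (∃ a, Real.sin a = s) with ⟨a, rfl⟩ | hs
  · have hsub : {θ | Real.sin θ = Real.sin a}
        ⊆ ⋃ k : ℤ, {2 * k * π + a, (2 * k + 1) * π - a} := by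
      intro θ hθ
      obtain ⟨k, hk⟩ := Real.sin_eq_sin_iff.mp hθ.symm
      exact Set.mem_iUnion.mpr ⟨k, by simpa using hk⟩
    exact ((Set.countable_iUnion fun k => (Set.toFinite _).countable).mono hsub).measure_zero _
  · push Not at hs
    simp [hs]

theorem mu_eq_Afun_sub_Bfun_mul (t1 t2 t3 θ y : ℝ) :
    mu t1 t2 t3 (θ, y) = Afun t1 t2 θ - Bfun t3 θ * exp (I * y) := by
  simp only [mu, Afun, Bfun, mul_add, Complex.exp_add]
  ring

theorem Bfun_ne_zero {t3 : ℝ} (ht3 : |t3| ≠ 1) (θ : ℝ) : Bfun t3 θ ≠ 0 := by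
  intro h
  have h' : (t3 : ℂ) * exp (I * θ) = -I := by
    rw [Bfun] at h
    linear_combination h
  apply ht3
  simpa [norm_exp_I_mul_ofReal] using congrArg norm h'

theorem sq_norm_Afun_sub_sq_norm_Bfun (t1 t2 t3 θ : ℝ) :
    ‖Afun t1 t2 θ‖ ^ 2 - ‖Bfun t3 θ‖ ^ 2
      = t1 ^ 2 + t2 ^ 2 - 1 - t3 ^ 2 - 2 * (t1 * t2 + t3) * Real.sin θ := by
  have hexp : exp (I * θ) = Real.cos θ + Real.sin θ * I := by
    rw [mul_comm, exp_mul_I, ← ofReal_cos, ← ofReal_sin]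
  rw [Complex.sq_norm, Complex.sq_norm, Afun, Bfun, hexp]
  simp only [normSq_apply, add_re, add_im, mul_re, mul_im, ofReal_re, ofReal_im, I_re, I_im]
  nlinarith [Real.sin_sq_add_cos_sq θ]

theorem ae_norm_Afun_ne_norm_Bfun {t1 t2 t3 : ℝ} (h : t1 * t2 + t3 ≠ 0) :
    ∀ᵐ θ : ℝ, ‖Afun t1 t2 θ‖ ≠ ‖Bfun t3 θ‖ := by
  filter_upwards [ae_sin_ne ((t1 ^ 2 + t2 ^ 2 - 1 - t3 ^ 2) / (2 * (t1 * t2 + t3)))]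
    with θ hθ hAB
  refine hθ ?_
  have hdiff := sq_norm_Afun_sub_sq_norm_Bfun t1 t2 t3 θ
  rw [hAB, sub_self] at hdiff
  field_simp
  linarith

theorem setIntegral_mul_exp_div_mu {t1 t2 t3 : ℝ} (ht3 : |t3| ≠ 1) (h : t1 * t2 + t3 ≠ 0)
    (hint : IntegrableOn (fun k : ℝ × ℝ => (mu t1 t2 t3 k)⁻¹)
      (Set.Icc (-π) π ×ˢ Set.Icc (-π) π))
    {φ : ℝ → ℂ} (hφ : Measurable φ) {C : ℝ} (hφC : ∀ θ, ‖φ θ‖ ≤ C) :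
    ∫ k in Set.Icc (-π) π ×ˢ Set.Icc (-π) π, φ k.1 * exp (I * k.2) / mu t1 t2 t3 k
      = -(2 * π) * ∫ θ in (-π)..π,
          φ θ * if ‖Afun t1 t2 θ‖ < ‖Bfun t3 θ‖ then (Bfun t3 θ)⁻¹ else 0 := by
  have hnum : ∀ k : ℝ × ℝ, ‖φ k.1 * exp (I * k.2)‖ ≤ C := fun k => by
    rw [norm_mul, Complex.norm_exp_I_mul_ofReal, mul_one]
    exact hφC k.1
  have hF : IntegrableOn (fun k : ℝ × ℝ => φ k.1 * exp (I * k.2) / mu t1 t2 t3 k)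
      (Set.Icc (-π) π ×ˢ Set.Icc (-π) π) := by
    simp only [div_eq_mul_inv]
    exact hint.bdd_mul (by fun_prop) (.of_forall hnum)
  rw [Measure.volume_eq_prod] at hF ⊢
  have hπ : -π ≤ π := by linarith [pi_pos]
  rw [setIntegral_prod _ hF, setIntegral_Icc_eq_intervalIntegral hπ,
    ← intervalIntegral.integral_const_mul]
  refine intervalIntegral.integral_congr_ae ?_
  filter_upwards [ae_norm_Afun_ne_norm_Bfun h] with θ hAB _
  simp only [setIntegral_Icc_eq_intervalIntegral hπ, mu_eq_Afun_sub_Bfun_mul, mul_div_assoc,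
    intervalIntegral.integral_const_mul,
    intervalIntegral_exp_div_sub_mul_exp (Bfun_ne_zero ht3 θ) hAB]
  ring

/-- Residue-theorem identities:
`(2π)⁻² ∫ e^{i k₂}/μ dk = −(2π)⁻¹ ∫ 1{|A|<|B|}/B dθ` and
`(2π)⁻² ∫ e^{i(k₁+k₂)}/μ dk = −(2π)⁻¹ ∫ e^{iθ} 1{|A|<|B|}/B dθ`. -/
theorem residue_identities_B (t1 t2 t3 : ℝ) (ht1 : 0 < t1) (ht2 : 0 < t2) (ht3 : 0 < t3)
    (h31 : t3 ≠ 1)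
    (hint : IntegrableOn (fun k : ℝ × ℝ => (mu t1 t2 t3 k)⁻¹)
      (Set.Icc (-π) π ×ˢ Set.Icc (-π) π)) :
    (((2 * π) ^ 2 : ℝ) : ℂ)⁻¹ *
        (∫ k in Set.Icc (-π) π ×ˢ Set.Icc (-π) π,
          Complex.exp (Complex.I * (k.2 : ℂ)) / mu t1 t2 t3 k)
      = -(((2 * π : ℝ) : ℂ)⁻¹ *
        ∫ θ in (-π)..π,
          (if ‖Afun t1 t2 θ‖ < ‖Bfun t3 θ‖
            then (Bfun t3 θ)⁻¹ else 0)) ∧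
    (((2 * π) ^ 2 : ℝ) : ℂ)⁻¹ *
        (∫ k in Set.Icc (-π) π ×ˢ Set.Icc (-π) π,
          Complex.exp (Complex.I * ((k.1 : ℂ) + (k.2 : ℂ))) / mu t1 t2 t3 k)
      = -(((2 * π : ℝ) : ℂ)⁻¹ *
        ∫ θ in (-π)..π,
          (if ‖Afun t1 t2 θ‖ < ‖Bfun t3 θ‖
            then Complex.exp (Complex.I * (θ : ℂ)) * (Bfun t3 θ)⁻¹ else 0)) := by
  have hB : |t3| ≠ 1 := by rwa [abs_of_pos ht3]
  have hsum : t1 * t2 + t3 ≠ 0 := by positivity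
  have hnormalize : ∀ J : ℂ, (((2 * π) ^ 2 : ℝ) : ℂ)⁻¹ * (-(2 * π) * J)
      = -(((2 * π : ℝ) : ℂ)⁻¹ * J) := fun J => by
    have : (π : ℂ) ≠ 0 := ofReal_ne_zero.mpr pi_ne_zero
    push_cast
    field_simp
  constructor
  · have h1 := setIntegral_mul_exp_div_mu hB hsum hint measurable_const (C := 1)
      (fun _ => norm_one.le)
    simp only [one_mul] at h1
    rw [h1, hnormalize]
  · have hexp := setIntegral_mul_exp_div_mu hB hsum hint (by fun_prop : Measurable
      fun θ : ℝ => exp (I * θ)) (fun θ => (Complex.norm_exp_I_mul_ofReal θ).le)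
    simp only [mul_ite, mul_zero, ← Complex.exp_add, ← mul_add] at hexp
    rw [hexp, hnormalize]
end

section
/- Let t1, t2, t3 > 0 with t1 ≠ t2 and t3 ≠ 1, and set K1 = t1, K2 = i·t2, K3 = −t3, K4 = −i. Let p⁺ = (p1,p2) ∈ ℝ² satisfy μ(p⁺) = 0, set p1⁻ := π − p1, let β_+ := ∂_{k2}μ(p⁺) and β_− := −conj(β_+), and assume β_− ≠ 0. Then the following cancellation identity holds: −(2/π)·(β_+/β_−)·cos(p1)·cos(p2) − β_+·exp(i(p1+p2))·(2π)^{−1} ∫_{p1⁻}^{p1+2π} dθ/(K1 + K2·exp(iθ)) + β_+·exp(i p1)·(2π)^{−1} ∫_{p1}^{p1⁻} dθ/(K3·exp(iθ) + K4) + β_+·K1·exp(i p2)·(2π)^{−1} ∫_{p1⁻}^{p1+2π} (exp(i p1) − exp(iθ))/(K1 + K2·exp(iθ))² dθ + β_+·K4·(2π)^{−1} ∫_{p1}^{p1⁻} (exp(iθ) − exp(i p1))/(K3·exp(iθ) + K4)² dθ = 0. (Note that |K1 + K2 exp(iθ)|² ≥ (t1−t2)² > 0 and |K3 exp(iθ)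 + K4|² ≥ (1−t3)² > 0, so all integrands are bounded.) -/
open Complex Real ComplexConjugate

/-!
With `a = exp (i p₁)` and `b = exp (i p₂)`, each pair of integrals over a common interval
combines into an exact derivative `k f' / f²`, where `f θ = K₁ + K₂ exp (i θ)` resp.
`K₃ exp (i θ) + K₄` does not vanish on the circle. The integrals therefore reduce to boundary
values of `1 / f` at `exp (i θ) ∈ {a, -a⁻¹}`, and what remains is a rational identity in `a` and
`b` which follows from `μ(p⁺) = 0` together with its complex conjugate.
-/

lemma conj_exp_I_mul_ofReal (θ : ℝ) : conj (exp (I * θ)) = (exp (I * θ))⁻¹ := by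
  rw [← exp_conj, ← Complex.exp_neg]; simp

lemma hasDerivAt_exp_I_mul_ofReal (θ : ℝ) :
    HasDerivAt (fun x : ℝ => exp (I * x)) (I * exp (I * θ)) θ := by
  simpa [mul_comm] using ((ofRealCLM.hasDerivAt (x := θ)).const_mul I).cexp

lemma exp_I_mul_ofReal_add_two_pi (θ : ℝ) :
    exp (I * ((θ + 2 * π : ℝ) : ℂ)) = exp (I * θ) := by
  push_cast
  rw [mul_add, Complex.exp_add, show I * (2 * π) = 2 * π * I by ring, exp_two_pi_mul_I, mul_one]

lemma exp_I_mul_ofReal_pi_sub (θ : ℝ) :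
    exp (I * ((π - θ : ℝ) : ℂ)) = -(exp (I * θ))⁻¹ := by
  push_cast
  rw [mul_sub, Complex.exp_sub, show I * π = π * I by ring, exp_pi_mul_I, div_eq_mul_inv,
    neg_one_mul]

lemma ofReal_cos_eq_exp_I_mul (θ : ℝ) :
    (Real.cos θ : ℂ) = (exp (I * θ) + (exp (I * θ))⁻¹) / 2 := by
  rw [ofReal_cos, Complex.cos, ← Complex.exp_neg]; ring_nf

lemma add_mul_ne_zero_of_norm_ne {c d w : ℂ} (hw : ‖w‖ = 1) (hcd : ‖c‖ ≠ ‖d‖) :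
    c + d * w ≠ 0 := by
  intro h
  apply hcd
  rw [eq_neg_of_add_eq_zero_left h, norm_neg, norm_mul, hw, mul_one]

/-- The integrand is `k f' / f²`, with antiderivative `-k / f`. -/
lemma integral_inv_add_integral_div_sq {f f' n : ℝ → ℂ} {x y k : ℂ}
    (hf : ∀ θ, HasDerivAt f (f' θ) θ) (hn : Continuous n)
    (hf0 : ∀ θ, f θ ≠ 0) (hcomb : ∀ θ, x * f θ + y * n θ = k * f' θ) (u v : ℝ) :
    x * (∫ θ in u..v, (f θ)⁻¹) + y * ∫ θ in u..v, n θ / f θ ^ 2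
      = k * ((f u)⁻¹ - (f v)⁻¹) := by
  have hfc : Continuous f := continuous_iff_continuousAt.2 fun θ => (hf θ).continuousAt
  have hi1 : IntervalIntegrable (fun θ => x * (f θ)⁻¹) MeasureTheory.volume u v :=
    ((hfc.inv₀ hf0).intervalIntegrable u v).const_mul x
  have hi2 : IntervalIntegrable (fun θ => y * (n θ / f θ ^ 2)) MeasureTheory.volume u v :=
    ((hn.div (hfc.pow 2) fun θ => pow_ne_zero 2 (hf0 θ)).intervalIntegrable u v).const_mul y
  rw [← intervalIntegral.integral_const_mul, ← intervalIntegral.integral_const_mul,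
    ← intervalIntegral.integral_add hi1 hi2,
    intervalIntegral.integral_eq_sub_of_hasDerivAt (f := fun θ => -k * (f θ)⁻¹)
      (fun θ _ => ((hf θ).inv (hf0 θ)).const_mul (-k) |>.congr_deriv ?_) (hi1.add hi2)]
  · ring
  · have := hf0 θ
    field_simp
    linear_combination -(hcomb θ)

lemma integral_inv_add_integral_div_sq_of_eq_add_mul_exp {f : ℝ → ℂ} {c d : ℂ}
    (hf : ∀ θ : ℝ, f θ = c + d * exp (I * θ)) (hd : d ≠ 0) (hcd : ‖c‖ ≠ ‖d‖)
    (a : ℂ) (u v : ℝ) :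
    a * (∫ θ in u..v, (f θ)⁻¹) + c * ∫ θ in u..v, (exp (I * θ) - a) / f θ ^ 2
      = (a * d + c) / (d * I) * ((f u)⁻¹ - (f v)⁻¹) := by
  refine integral_inv_add_integral_div_sq (f' := fun θ => d * (I * exp (I * θ)))
    (fun θ => ?_) (by fun_prop) (fun θ => ?_) (fun θ => ?_) u v
  · rw [show f = fun θ : ℝ => c + d * exp (I * θ) from funext hf]
    exact ((hasDerivAt_exp_I_mul_ofReal θ).const_mul d).const_add c
  · rw [hf]; exact add_mul_ne_zero_of_norm_ne (norm_exp_I_mul_ofReal θ) hcd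
  · rw [hf]; field_simp; ring

lemma mu_eq (t1 t2 t3 : ℝ) (k : ℝ × ℝ) :
    mu t1 t2 t3 k = t1 + I * t2 * exp (I * k.1) - t3 * (exp (I * k.1) * exp (I * k.2))
      - I * exp (I * k.2) := by
  rw [mu, mul_add, Complex.exp_add]

lemma hasDerivAt_mu_snd (t1 t2 t3 k1 k2 : ℝ) :
    HasDerivAt (fun y : ℝ => mu t1 t2 t3 (k1, y))
      (exp (I * k2) - I * t3 * (exp (I * k1) * exp (I * k2))) k2 := by
  simp only [mu_eq]
  have he := hasDerivAt_exp_I_mul_ofReal k2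
  refine ((((he.const_mul _).const_mul _).const_sub _).fun_sub (he.const_mul I)).congr_deriv ?_
  linear_combination -Complex.exp (I * k2) * I_sq

lemma mul_conj_mu (t1 t2 t3 : ℝ) (k : ℝ × ℝ) :
    exp (I * k.1) * exp (I * k.2) * conj (mu t1 t2 t3 k)
      = t1 * (exp (I * k.1) * exp (I * k.2)) - I * t2 * exp (I * k.2) - t3
        + I * exp (I * k.1) := by
  simp only [mu_eq, map_sub, map_add, map_mul, conj_ofReal, conj_I, conj_exp_I_mul_ofReal]
  field_simp
  ring

/-- Here `a = exp (i p₁)`, `b = exp (i p₂)`, `hz1` is `μ(p⁺) = 0` and `hz2` is its conjugate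
times `a b`. Once `t₁ + i t₂ a = b (t₃ a + i)` and `b (t₁ a - i t₂) = t₃ - i a` are substituted,
the difference of the two sides is `b / (t₂ (t₃ - i a))` times `hz2 - a b hz1`. -/
lemma boundary_values_eq_of_mu_eq_zero {t1 t2 t3 : ℝ} {a b : ℂ} (ht2 : t2 ≠ 0) (ht3 : 0 < t3)
    (h31 : t3 ≠ 1) (ha : ‖a‖ = 1) (hb : b ≠ 0)
    (hz1 : t1 + I * t2 * a - t3 * (a * b) - I * b = 0)
    (hz2 : t1 * (a * b) - I * t2 * b - t3 + I * a = 0) :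
    (a * -t3 + -I) / (-t3 * I) * ((-t3 * a - I)⁻¹ - (-t3 * -a⁻¹ - I)⁻¹)
      - b * ((a * (I * t2) + t1) / (I * t2 * I)
          * ((t1 + I * t2 * -a⁻¹)⁻¹ - (t1 + I * t2 * a)⁻¹))
      = 4 * ((a + a⁻¹) / 2) * ((b + b⁻¹) / 2) / -(b⁻¹ + I * t3 * (a⁻¹ * b⁻¹)) := by
  have ha0 : a ≠ 0 := norm_ne_zero_iff.1 (by simp [ha])
  have ht2' : (t2 : ℂ) ≠ 0 := ofReal_ne_zero.2 ht2
  have ht3' : (t3 : ℂ) ≠ 0 := ofReal_ne_zero.2 ht3.ne'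
  have hP : t3 * a + I ≠ 0 := by
    rw [add_comm]
    exact add_mul_ne_zero_of_norm_ne ha (by simpa [abs_of_pos ht3] using h31.symm)
  have hQ : t3 - I * a ≠ 0 := by
    rw [sub_eq_add_neg, ← neg_mul]
    exact add_mul_ne_zero_of_norm_ne ha (by simpa [abs_of_pos ht3] using h31)
  have hfa : t1 + I * t2 * a = b * (t3 * a + I) := by linear_combination hz1
  have hfa' : a * (I * t2) + t1 = b * (t3 * a + I) := by linear_combination hz1
  have hfa_inv : t1 + I * t2 * -a⁻¹ = (t3 - I * a) / (a * b) := by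
    field_simp
    linear_combination hz2
  have hβm : -(b⁻¹ + I * t3 * (a⁻¹ * b⁻¹)) = -I * (t3 - I * a) / (a * b) := by
    field_simp
    linear_combination -a * I_sq
  have hga : -t3 * a - I = -(t3 * a + I) := by ring
  have hga_inv : -t3 * -a⁻¹ - I = (t3 - I * a) / a := by field_simp
  rw [hfa, hfa', hfa_inv, hβm, hga, hga_inv, ← sub_eq_zero]
  calc _ = b / (t2 * (t3 - I * a)) * ((t1 * (a * b) - I * t2 * b - t3 + I * a)
          - a * b * (t1 + I * t2 * a - t3 * (a * b) - I * b)) := by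
        have hP' : a * t3 + I ≠ 0 := by rwa [mul_comm]
        have hQ' : t3 - a * I ≠ 0 := by rwa [mul_comm]
        field_simp
        ring_nf
        simp only [I_sq, I_pow_three, I_pow_four]
        ring_nf
    _ = 0 := by rw [hz1, hz2]; ring

theorem haldane_cancellation_general (t1 t2 t3 : ℝ) (ht1 : 0 < t1) (ht2 : 0 < t2) (ht3 : 0 < t3)
    (h12 : t1 ≠ t2) (h31 : t3 ≠ 1)
    (pplus : ℝ × ℝ) (hzero : mu t1 t2 t3 pplus = 0)
    (p1minus : ℝ) (hp1m : p1minus = π - pplus.1)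
    (βp βm : ℂ) (hβp : βp = deriv (fun y : ℝ => mu t1 t2 t3 (pplus.1, y)) pplus.2)
    (hβm : βm = -conj βp) :
    -(2 / (π : ℂ)) * (βp / βm) * (Real.cos pplus.1 : ℂ) * (Real.cos pplus.2 : ℂ)
      - βp * Complex.exp (Complex.I * ((pplus.1 : ℂ) + (pplus.2 : ℂ))) * ((2 * π : ℝ) : ℂ)⁻¹ *
        (∫ θ in p1minus..(pplus.1 + 2 * π),
          ((t1 : ℂ) + Complex.I * (t2 : ℂ) * Complex.exp (Complex.I * (θ : ℂ)))⁻¹)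
      + βp * Complex.exp (Complex.I * (pplus.1 : ℂ)) * ((2 * π : ℝ) : ℂ)⁻¹ *
        (∫ θ in pplus.1..p1minus,
          (-(t3 : ℂ) * Complex.exp (Complex.I * (θ : ℂ)) - Complex.I)⁻¹)
      + βp * (t1 : ℂ) * Complex.exp (Complex.I * (pplus.2 : ℂ)) * ((2 * π : ℝ) : ℂ)⁻¹ *
        (∫ θ in p1minus..(pplus.1 + 2 * π),
          (Complex.exp (Complex.I * (pplus.1 : ℂ)) - Complex.exp (Complex.I * (θ : ℂ)))
            / ((t1 : ℂ) + Complex.I * (t2 : ℂ) * Complex.exp (Complex.I * (θ : ℂ))) ^ 2)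
      + βp * (-Complex.I) * ((2 * π : ℝ) : ℂ)⁻¹ *
        (∫ θ in pplus.1..p1minus,
          (Complex.exp (Complex.I * (θ : ℂ)) - Complex.exp (Complex.I * (pplus.1 : ℂ)))
            / (-(t3 : ℂ) * Complex.exp (Complex.I * (θ : ℂ)) - Complex.I) ^ 2)
      = 0 := by
  obtain ⟨p1, p2⟩ := pplus
  subst hp1m hβm hβp
  have hA := integral_inv_add_integral_div_sq_of_eq_add_mul_exp
    (f := fun θ : ℝ => (t1 : ℂ) + I * t2 * exp (I * θ)) (fun _ => rfl)
    (by simpa using ht2.ne') (by simpa [abs_of_pos ht1, abs_of_pos ht2] using h12)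
    (exp (I * p1)) (π - p1) (p1 + 2 * π)
  have hB := integral_inv_add_integral_div_sq_of_eq_add_mul_exp
    (f := fun θ : ℝ => -(t3 : ℂ) * exp (I * θ) - I) (c := -I) (d := -t3) (fun _ => by ring)
    (by simpa using ht3.ne') (by simpa [abs_of_pos ht3] using h31.symm)
    (exp (I * p1)) p1 (π - p1)
  simp only [exp_I_mul_ofReal_pi_sub, exp_I_mul_ofReal_add_two_pi] at hA hB
  have hA_neg :
      ∫ θ in π - p1..p1 + 2 * π, (exp (I * p1) - exp (I * θ)) / (t1 + I * t2 * exp (I * θ)) ^ 2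
      = -∫ θ in π - p1..p1 + 2 * π,
          (exp (I * θ) - exp (I * p1)) / (t1 + I * t2 * exp (I * θ)) ^ 2 := by
    rw [← intervalIntegral.integral_neg]; congr 1; ext θ; ring
  have hboundary := boundary_values_eq_of_mu_eq_zero ht2.ne' ht3 h31 (norm_exp_I_mul_ofReal p1)
    (exp_ne_zero _)
    ((mu_eq t1 t2 t3 (p1, p2)).symm.trans hzero)
    ((mul_conj_mu t1 t2 t3 (p1, p2)).symm.trans (by rw [hzero, map_zero, mul_zero]))
  rw [(hasDerivAt_mu_snd t1 t2 t3 p1 p2).deriv]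
  simp only [map_sub, map_mul, conj_ofReal, conj_I, conj_exp_I_mul_ofReal,
    ofReal_cos_eq_exp_I_mul, mul_add, Complex.exp_add, ofReal_mul, ofReal_ofNat]
  dsimp only at hboundary
  linear_combination (exp (I * p2) - I * t3 * (exp (I * p1) * exp (I * p2))) * (2 * π : ℂ)⁻¹ *
    (hB - exp (I * p2) * hA + hboundary + t1 * exp (I * p2) * hA_neg)

/-- The cancellation identity behind the Haldane relation at first order: with `K₁ = t₁`,
`K₂ = i t₂`, `K₃ = −t₃`, `K₄ = −i`, `p₁⁻ = π − p₁`, `β₊ = ∂₂μ(p⁺)` and `β₋ = −conj β₊`,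
the explicit combination of boundary integrals vanishes. -/
theorem haldane_cancellation (t1 t2 t3 : ℝ) (ht1 : 0 < t1) (ht2 : 0 < t2) (ht3 : 0 < t3)
    (h12 : t1 ≠ t2) (h31 : t3 ≠ 1)
    (pplus : ℝ × ℝ) (hzero : mu t1 t2 t3 pplus = 0)
    (p1minus : ℝ) (hp1m : p1minus = π - pplus.1)
    (βp βm : ℂ) (hβp : βp = deriv (fun y : ℝ => mu t1 t2 t3 (pplus.1, y)) pplus.2)
    (hβm : βm = -conj βp) (hbm : βm ≠ 0) :
    -(2 / (π : ℂ)) * (βp / βm) * (Real.cos pplus.1 : ℂ) * (Real.cos pplus.2 : ℂ)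
      - βp * Complex.exp (Complex.I * ((pplus.1 : ℂ) + (pplus.2 : ℂ))) * ((2 * π : ℝ) : ℂ)⁻¹ *
        (∫ θ in p1minus..(pplus.1 + 2 * π),
          ((t1 : ℂ) + Complex.I * (t2 : ℂ) * Complex.exp (Complex.I * (θ : ℂ)))⁻¹)
      + βp * Complex.exp (Complex.I * (pplus.1 : ℂ)) * ((2 * π : ℝ) : ℂ)⁻¹ *
        (∫ θ in pplus.1..p1minus,
          (-(t3 : ℂ) * Complex.exp (Complex.I * (θ : ℂ)) - Complex.I)⁻¹)
      + βp * (t1 : ℂ) * Complex.exp (Complex.I * (pplus.2 : ℂ)) * ((2 * π : ℝ) : ℂ)⁻¹ *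
        (∫ θ in p1minus..(pplus.1 + 2 * π),
          (Complex.exp (Complex.I * (pplus.1 : ℂ)) - Complex.exp (Complex.I * (θ : ℂ)))
            / ((t1 : ℂ) + Complex.I * (t2 : ℂ) * Complex.exp (Complex.I * (θ : ℂ))) ^ 2)
      + βp * (-Complex.I) * ((2 * π : ℝ) : ℂ)⁻¹ *
        (∫ θ in pplus.1..p1minus,
          (Complex.exp (Complex.I * (θ : ℂ)) - Complex.exp (Complex.I * (pplus.1 : ℂ)))
            / (-(t3 : ℂ) * Complex.exp (Complex.I * (θ : ℂ)) - Complex.I) ^ 2)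
      = 0 :=
  haldane_cancellation_general t1 t2 t3 ht1 ht2 ht3 h12 h31 pplus hzero p1minus hp1m βp βm hβp hβm
end
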